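/- arXiv:math/0502313 — 3 statements merged into one kernel-verified Lean document; each statement's English description precedes it below -/
import Mathlib

section
/- Let R = R₁ + ⋯ + R_k be an orthogonal union of nonempty irreducible root systems of norm 2 in ℝⁿ, with Rᵢ ⊆ Vᵢ of dimension nᵢ and Coxeter number hᵢ = |Rᵢ|/nᵢ. If R is a spherical 3-design, then all hᵢ are equal (R is strongly eutactic). The proof uses the harmonic polynomials f_{i,j}(x) = ⟨xᵢ,xᵢ⟩/(2nᵢ) - ⟨xⱼ,xⱼ⟩/(2nⱼ), where x = x₁+⋯+x_k is the orthogonal decomposition. -/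
open MvPolynomial

noncomputable section

def IsHarmonic {n : ℕ} (P : MvPolynomial (Fin n) ℝ) : Prop :=
  ∑ i : Fin n, pderiv i (pderiv i P) = 0

def evalAt {n : ℕ} (x : EuclideanSpace ℝ (Fin n)) (P : MvPolynomial (Fin n) ℝ) : ℝ :=
  eval (fun i => x i) P

/-!
The quadratic form `qᵢ x = ‖proj_{Vᵢ} x‖²` has constant Laplacian `2 dim Vᵢ`, so
`dim Vⱼ • qᵢ - dim Vᵢ • qⱼ` is a harmonic polynomial of degree 2. On a root of `Rₗ`, `qᵢ` takes
the value 2 if `l = i` and 0 otherwise (the `Vₗ` are orthogonal), so the design condition in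
degree 2 reads `2 dim Vⱼ |Rᵢ| - 2 dim Vᵢ |Rⱼ| = 0`.
-/

section QuadraticTestPolynomials

variable {n : ℕ}

def laplacian : MvPolynomial (Fin n) ℝ →ₗ[ℝ] MvPolynomial (Fin n) ℝ :=
  ∑ i, (pderiv i).toLinearMap ∘ₗ (pderiv i).toLinearMap

theorem laplacian_apply (P : MvPolynomial (Fin n) ℝ) :
    laplacian P = ∑ i, pderiv i (pderiv i P) := by
  simp [laplacian]

theorem isHarmonic_iff_laplacian_eq_zero (P : MvPolynomial (Fin n) ℝ) :
    IsHarmonic P ↔ laplacian P = 0 := by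
  rw [laplacian_apply, IsHarmonic]

def innerPoly (v : EuclideanSpace ℝ (Fin n)) : MvPolynomial (Fin n) ℝ :=
  ∑ a, C (v a) * X a

theorem evalAt_innerPoly (v x : EuclideanSpace ℝ (Fin n)) :
    evalAt x (innerPoly v) = inner ℝ v x := by
  simp [innerPoly, evalAt, PiLp.inner_apply, mul_comm]

theorem isHomogeneous_innerPoly (v : EuclideanSpace ℝ (Fin n)) :
    (innerPoly v).IsHomogeneous 1 :=
  IsHomogeneous.sum _ _ _ fun a _ => (isHomogeneous_X ℝ a).C_mul _

theorem pderiv_innerPoly (c : Fin n) (v : EuclideanSpace ℝ (Fin n)) :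
    pderiv c (innerPoly v) = C (v c) := by
  simp [innerPoly, pderiv_X, Pi.single_apply]

theorem laplacian_innerPoly_sq (v : EuclideanSpace ℝ (Fin n)) :
    laplacian (innerPoly v ^ 2) = C (2 * ‖v‖ ^ 2) := by
  have hsecond : ∀ c, pderiv c (pderiv c (innerPoly v ^ 2)) = C (2 * (v c * v c)) := by
    intro c
    simp only [pow_two, Derivation.leibniz, pderiv_innerPoly, smul_eq_mul, map_add,
      pderiv_C, mul_zero, zero_add, C_mul, map_ofNat]
    ring
  rw [laplacian_apply, Finset.sum_congr rfl fun c _ => hsecond c, ← map_sum, ← Finset.mul_sum]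
  rw [EuclideanSpace.real_norm_sq_eq]
  simp only [sq]

variable (W : Submodule ℝ (EuclideanSpace ℝ (Fin n)))

/-- `x ↦ ‖proj_W x‖²`; for `W = Vᵢ` this is the paper's `⟨xᵢ, xᵢ⟩`. -/
def projNormSqPoly : MvPolynomial (Fin n) ℝ :=
  ∑ t, innerPoly (stdOrthonormalBasis ℝ W t : EuclideanSpace ℝ (Fin n)) ^ 2

theorem isHomogeneous_projNormSqPoly : (projNormSqPoly W).IsHomogeneous 2 :=
  IsHomogeneous.sum _ _ _ fun _ _ => by simpa using (isHomogeneous_innerPoly _).pow 2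

theorem laplacian_projNormSqPoly :
    laplacian (projNormSqPoly W) = C (2 * Module.finrank ℝ W : ℝ) := by
  have hunit (t) : ‖(stdOrthonormalBasis ℝ W t : EuclideanSpace ℝ (Fin n))‖ = 1 :=
    (stdOrthonormalBasis ℝ W).norm_eq_one t
  simp [projNormSqPoly, laplacian_innerPoly_sq, hunit, mul_comm]

theorem evalAt_projNormSqPoly (x : EuclideanSpace ℝ (Fin n)) :
    evalAt x (projNormSqPoly W) =
      ∑ t, inner ℝ (stdOrthonormalBasis ℝ W t : EuclideanSpace ℝ (Fin n)) x ^ 2 := by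
  simp [projNormSqPoly, evalAt, ← evalAt_innerPoly]

theorem evalAt_projNormSqPoly_of_mem {x : EuclideanSpace ℝ (Fin n)} (hx : x ∈ W) :
    evalAt x (projNormSqPoly W) = inner ℝ x x := by
  have hparseval := (stdOrthonormalBasis ℝ W).sum_inner_mul_inner ⟨x, hx⟩ ⟨x, hx⟩
  simp only [Submodule.coe_inner, real_inner_comm _ x] at hparseval
  simpa [evalAt_projNormSqPoly, sq] using hparseval

theorem evalAt_projNormSqPoly_of_mem_orthogonal {x : EuclideanSpace ℝ (Fin n)} (hx : x ∈ Wᗮ) :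
    evalAt x (projNormSqPoly W) = 0 := by
  simp [evalAt_projNormSqPoly, (Submodule.mem_orthogonal W x).1 hx _ (Submodule.coe_mem _)]

theorem sum_sum_evalAt_projNormSqPoly {ι : Type*} [Fintype ι]
    (V : ι → Submodule ℝ (EuclideanSpace ℝ (Fin n)))
    (horth : ∀ i j, i ≠ j → ∀ x ∈ V i, ∀ y ∈ V j, (inner ℝ x y : ℝ) = 0)
    (R : ι → Finset (EuclideanSpace ℝ (Fin n)))
    (hsub : ∀ i, ∀ x ∈ R i, x ∈ V i) (hnorm : ∀ i, ∀ x ∈ R i, (inner ℝ x x : ℝ) = 2) (i : ι) :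
    ∑ l, ∑ x ∈ R l, evalAt x (projNormSqPoly (V i)) = 2 * (R i).card := by
  rw [Finset.sum_eq_single i]
  · rw [Finset.sum_congr rfl fun x hx =>
      (evalAt_projNormSqPoly_of_mem _ (hsub i x hx)).trans (hnorm i x hx)]
    simp [mul_comm]
  · intro l _ hli
    refine Finset.sum_eq_zero fun x hx => evalAt_projNormSqPoly_of_mem_orthogonal _ ?_
    exact (Submodule.mem_orthogonal _ _).2 fun u hu => horth i l hli.symm u hu x (hsub l x hx)
  · simp

end QuadraticTestPolynomials

theorem union_design_implies_strongly_eutactic_general (n k : ℕ)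
    (V : Fin k → Submodule ℝ (EuclideanSpace ℝ (Fin n)))
    (horth : ∀ i j, i ≠ j → ∀ x ∈ V i, ∀ y ∈ V j, (inner ℝ x y : ℝ) = 0)
    (R : Fin k → Finset (EuclideanSpace ℝ (Fin n)))
    (hne : ∀ i, (R i).Nonempty)
    (hsub : ∀ i, ∀ x ∈ R i, x ∈ V i)
    (hnorm : ∀ i, ∀ x ∈ R i, (inner ℝ x x : ℝ) = 2)
    (hdesign : ∀ j : ℕ, 1 ≤ j → j ≤ 3 → ∀ P : MvPolynomial (Fin n) ℝ,
        P.IsHomogeneous j → IsHarmonic P →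
        ∑ i : Fin k, ∑ x ∈ R i, evalAt x P = 0) :
    ∀ i j : Fin k,
      ((R i).card : ℝ) / (Module.finrank ℝ (V i)) =
        ((R j).card : ℝ) / (Module.finrank ℝ (V j)) := by
  intro i j
  have hdim (l : Fin k) : (0 : ℝ) < Module.finrank ℝ (V l) := by
    obtain ⟨x, hx⟩ := hne l
    have hx0 : x ≠ 0 := by
      rintro rfl
      simpa using hnorm l 0 hx
    exact_mod_cast Module.finrank_pos_iff_exists_ne_zero.2
      ⟨(⟨x, hsub l x hx⟩ : V l), by simpa using hx0⟩
  set mi : ℝ := (Module.finrank ℝ (V i) : ℝ)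
  set mj : ℝ := (Module.finrank ℝ (V j) : ℝ)
  -- the paper's `f_{i,j}`, scaled by `2 mᵢ mⱼ`
  set P := mj • projNormSqPoly (V i) - mi • projNormSqPoly (V j)
  have hhom : P.IsHomogeneous 2 := by
    simp only [P, smul_eq_C_mul]
    exact ((isHomogeneous_projNormSqPoly _).C_mul _).sub ((isHomogeneous_projNormSqPoly _).C_mul _)
  have hharm : IsHarmonic P := by
    rw [isHarmonic_iff_laplacian_eq_zero, map_sub, map_smul, map_smul, laplacian_projNormSqPoly,
      laplacian_projNormSqPoly, smul_eq_C_mul, smul_eq_C_mul, ← C_mul, ← C_mul, ← map_sub]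
    rw [show mj * (2 * mi) - mi * (2 * mj) = 0 by ring, map_zero]
  have hsplit (x : EuclideanSpace ℝ (Fin n)) :
      evalAt x P = mj * evalAt x (projNormSqPoly (V i)) - mi * evalAt x (projNormSqPoly (V j)) := by
    simp [P, evalAt]
  have hsum := hdesign 2 (by norm_num) (by norm_num) P hhom hharm
  simp only [hsplit, Finset.sum_sub_distrib, ← Finset.mul_sum,
    sum_sum_evalAt_projNormSqPoly V horth R hsub hnorm] at hsum
  rw [div_eq_div_iff (hdim i).ne' (hdim j).ne']
  linarith

/-- if an orthogonal union `R = R₁ + ⋯ + R_k` of nonempty root systems of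
norm 2, with `Rᵢ` spanning the pairwise-orthogonal subspaces `Vᵢ` whose direct sum is `ℝⁿ`,
is a spherical 3-design, then all Coxeter numbers `hᵢ = |Rᵢ|/dim Vᵢ` coincide, i.e. `R`
is strongly eutactic. -/
theorem union_design_implies_strongly_eutactic (n k : ℕ)
    (V : Fin k → Submodule ℝ (EuclideanSpace ℝ (Fin n)))
    (horth : ∀ i j, i ≠ j → ∀ x ∈ V i, ∀ y ∈ V j, (inner ℝ x y : ℝ) = 0)
    (hspanall : (⨆ i, V i) = ⊤)
    (R : Fin k → Finset (EuclideanSpace ℝ (Fin n)))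
    (hne : ∀ i, (R i).Nonempty)
    (hzero : ∀ i, (0 : EuclideanSpace ℝ (Fin n)) ∉ R i)
    (hsub : ∀ i, ∀ x ∈ R i, x ∈ V i)
    (hnorm : ∀ i, ∀ x ∈ R i, (inner ℝ x x : ℝ) = 2)
    (hrefl : ∀ i, ∀ x ∈ R i, ∀ y ∈ R i, x - (inner ℝ x y : ℝ) • y ∈ R i)
    (hspan : ∀ i, Submodule.span ℝ (R i : Set (EuclideanSpace ℝ (Fin n))) = V i)
    (hdesign : ∀ j : ℕ, 1 ≤ j → j ≤ 3 → ∀ P : MvPolynomial (Fin n) ℝ,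
        P.IsHomogeneous j → IsHarmonic P →
        ∑ i : Fin k, ∑ x ∈ R i, evalAt x P = 0) :
    ∀ i j : Fin k,
      ((R i).card : ℝ) / (Module.finrank ℝ (V i)) =
        ((R j).card : ℝ) / (Module.finrank ℝ (V j)) :=
  union_design_implies_strongly_eutactic_general n k V horth R hne hsub hnorm hdesign

end
end

section
/- Let R be a nonempty strongly eutactic root system of norm 2 in ℝⁿ with Coxeter number h. Then for each j, the condition that ∑_{x∈R} f(x) = 0 for all harmonic homogeneous polynomials f of degree 2j is equivalent to the numerical identity 2·Q^{(2j)}(1) + (4h-8)·Q^{(2j)}(1/2) + (nh - 4h + 6)·Q^{(2j)}(0) = 0, where Q^{(2j)} is the Gegenbauer polynomial of degree 2j normalized by Q^{(2j)}(1) = dim Har_{2j}(ℝⁿ). In particular, for 2j = 4 this condition reads (n-10)h + 6(n+2) = 0. -/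
/-!
Rescaled to the unit sphere, `R` becomes a weighting to which the kernel hypothesis applies, so the
design condition is equivalent to `∑_{x,y ∈ R} Q(⟨x,y⟩/2) = 0`. The weightings `δ_u - δ_{-u}` and
`δ_u - δ_{-u} + δ_v - δ_{-v}` annihilate every even function, so the kernel hypothesis forces
`Q(-⟨u,v⟩) = Q(⟨u,v⟩)` for unit vectors `u, v`. Hence every row of the double sum equals
`2 Q(1) + 2 N₁ Q(1/2) + N₀ Q(0)`, and counting the elements of one row shows that the natural-number
subtractions in `N₁ = 2h - 4` and `N₀ = nh - 4h + 6` do not truncate. For degree `4` the identity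
factors as `n (n + 4) (n + 6) / 96 · ((n - 10) h + 6 (n + 2))`.
-/

open MvPolynomial

noncomputable section

open Finset
open scoped RealInnerProductSpace

theorem MvPolynomial.IsHomogeneous.eval_smul {σ R : Type*} [CommSemiring R]
    {φ : MvPolynomial σ R} {n : ℕ} (hφ : φ.IsHomogeneous n) (t : R) (x : σ → R) :
    eval (t • x) φ = t ^ n * eval x φ := by
  simp only [eval_eq, mul_sum]
  refine sum_congr rfl fun d hd => ?_
  rw [hφ.degree_eq_sum_deg_support hd, ← prod_pow_eq_pow_sum]
  simp only [Pi.smul_apply, smul_eq_mul, mul_pow, prod_mul_distrib]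
  ring

theorem MvPolynomial.IsHomogeneous.evalAt_smul {n d : ℕ} {P : MvPolynomial (Fin n) ℝ}
    (hP : P.IsHomogeneous d) (t : ℝ) (x : EuclideanSpace ℝ (Fin n)) :
    evalAt (t • x) P = t ^ d * evalAt x P :=
  hP.eval_smul t _

theorem Finset.sum_comp_eq_sum_card_smul {ι κ M : Type*} [AddCommMonoid M] [DecidableEq κ]
    {s : Finset ι} {t : Finset κ} {g : ι → κ} (h : ∀ i ∈ s, g i ∈ t) (f : κ → M) :
    ∑ i ∈ s, f (g i) = ∑ k ∈ t, #{i ∈ s | g i = k} • f k := by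
  rw [← sum_fiberwise_of_maps_to' h]
  simp only [sum_const]

section Dipole

variable {E : Type*} [Neg E]

def dipole (u : E) : E →₀ ℝ :=
  Finsupp.single u 1 + Finsupp.single (-u) (-1)

theorem linearCombination_dipole (f : E → ℝ) (u : E) :
    Finsupp.linearCombination ℝ f (dipole u) = f u - f (-u) := by
  simp [dipole, sub_eq_add_neg]

end Dipole

section KernelForm

variable {E : Type*} [NormedAddCommGroup E] [InnerProductSpace ℝ E]

def kernelForm (Q : ℝ → ℝ) : (E →₀ ℝ) →ₗ[ℝ] (E →₀ ℝ) →ₗ[ℝ] ℝ :=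
  Finsupp.linearCombination ℝ fun x => Finsupp.linearCombination ℝ fun y => Q ⟪x, y⟫

theorem kernelForm_apply (Q : ℝ → ℝ) (lam mu : E →₀ ℝ) :
    kernelForm Q lam mu = ∑ x ∈ lam.support, ∑ y ∈ mu.support, lam x * mu y * Q ⟪x, y⟫ := by
  simp [kernelForm, Finsupp.linearCombination_apply, Finsupp.sum, mul_sum, mul_assoc]

theorem kernelForm_single_single (Q : ℝ → ℝ) (x y : E) (a b : ℝ) :
    kernelForm Q (Finsupp.single x a) (Finsupp.single y b) = a * b * Q ⟪x, y⟫ := by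
  simp [kernelForm, mul_assoc]

theorem inner_self_of_mem_support_dipole {u x : E} (hx : x ∈ (dipole u).support) :
    ⟪x, x⟫ = ⟪u, u⟫ := by
  classical
  rcases mem_union.1 (Finsupp.support_add hx) with hx | hx <;>
    obtain rfl := mem_singleton.1 (Finsupp.support_single_subset hx)
  · rfl
  · exact inner_neg_neg _ _

theorem kernelForm_dipole_dipole (Q : ℝ → ℝ) (u v : E) :
    kernelForm Q (dipole u) (dipole v) = 2 * (Q ⟪u, v⟫ - Q (-⟪u, v⟫)) := by
  simp only [dipole, map_add, LinearMap.add_apply, kernelForm_single_single, inner_neg_left,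
    inner_neg_right, neg_neg]
  ring

-- For a reproducing kernel `Q ⟪x, y⟫` of a function space spanned by `𝓕`, `kernelForm Q lam lam`
-- is the squared norm of `∑ x, lam x • Q ⟪x, ·⟫`, which vanishes iff `lam` annihilates `𝓕`.
def DetectsDesigns (Q : ℝ → ℝ) (𝓕 : Set (E → ℝ)) : Prop :=
  ∀ lam : E →₀ ℝ, (∀ x ∈ lam.support, ⟪x, x⟫ = 1) →
    (kernelForm Q lam lam = 0 ↔ ∀ f ∈ 𝓕, Finsupp.linearCombination ℝ f lam = 0)

theorem real_inner_inv_sqrt_smul {r : ℝ} (hr : 0 ≤ r) (x y : E) :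
    ⟪(√r)⁻¹ • x, (√r)⁻¹ • y⟫ = ⟪x, y⟫ / r := by
  rw [real_inner_smul_left, real_inner_smul_right, ← mul_assoc, ← mul_inv, Real.mul_self_sqrt hr,
    inv_mul_eq_div]

theorem sum_apply_inner_eq_of_card_filter {R : Finset E} {x : E} {a b : ℕ}
    (h2 : #{y ∈ R | ⟪x, y⟫ = 2} = 1) (hm2 : #{y ∈ R | ⟪x, y⟫ = -2} = 1)
    (h1 : #{y ∈ R | ⟪x, y⟫ = 1} = a) (hm1 : #{y ∈ R | ⟪x, y⟫ = -1} = a)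
    (h0 : #{y ∈ R | ⟪x, y⟫ = 0} = b)
    (hvals : ∀ y ∈ R, ⟪x, y⟫ = 0 ∨ ⟪x, y⟫ = 1 ∨ ⟪x, y⟫ = -1 ∨ ⟪x, y⟫ = 2 ∨ ⟪x, y⟫ = -2)
    {F : ℝ → ℝ} (hF : ∀ t, F (-t) = F t) :
    ∑ y ∈ R, F ⟪x, y⟫ = 2 * F 2 + 2 * a * F 1 + b * F 0 := by
  classical
  rw [sum_comp_eq_sum_card_smul (t := {2, -2, 1, -1, 0}) fun y hy => by
    rcases hvals y hy with h | h | h | h | h <;> simp [h]]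
  norm_num [sum_insert, nsmul_eq_mul, h2, hm2, h1, hm1, h0, hF]
  ring

namespace DetectsDesigns

variable {Q : ℝ → ℝ} {𝓕 : Set (E → ℝ)}

theorem apply_neg_inner (hQ : DetectsDesigns Q 𝓕) (h𝓕 : ∀ f ∈ 𝓕, ∀ x, f (-x) = f x)
    {u v : E} (hu : ⟪u, u⟫ = 1) (hv : ⟪v, v⟫ = 1) : Q (-⟪u, v⟫) = Q ⟪u, v⟫ := by
  classical
  have hodd : ∀ w, ∀ f ∈ 𝓕, Finsupp.linearCombination ℝ f (dipole w) = 0 := fun w f hf => by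
    rw [linearCombination_dipole, h𝓕 f hf, sub_self]
  have hu' : kernelForm Q (dipole u) (dipole u) = 0 :=
    (hQ _ fun x hx => (inner_self_of_mem_support_dipole hx).trans hu).2 (hodd u)
  have huv : kernelForm Q (dipole u + dipole v) (dipole u + dipole v) = 0 := by
    refine (hQ _ fun x hx => ?_).2 fun f hf => by rw [map_add, hodd u f hf, hodd v f hf, add_zero]
    rcases mem_union.1 (Finsupp.support_add hx) with hx | hx
    · exact (inner_self_of_mem_support_dipole hx).trans hu
    · exact (inner_self_of_mem_support_dipole hx).trans hv
  simp only [map_add, LinearMap.add_apply, kernelForm_dipole_dipole, hu, hv,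
    real_inner_comm u v] at hu' huv
  linarith

theorem apply_abs_inner_div (hQ : DetectsDesigns Q 𝓕) (h𝓕 : ∀ f ∈ 𝓕, ∀ x, f (-x) = f x)
    {r : ℝ} (hr : 0 < r) {x y : E} (hx : ⟪x, x⟫ = r) (hy : ⟪y, y⟫ = r) :
    Q |⟪x, y⟫ / r| = Q (⟪x, y⟫ / r) := by
  have hunit : ∀ z : E, ⟪z, z⟫ = r → ⟪(√r)⁻¹ • z, (√r)⁻¹ • z⟫ = 1 := fun z hz => by
    rw [real_inner_inv_sqrt_smul hr.le, hz, div_self hr.ne']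
  rcases abs_choice (⟪x, y⟫ / r) with hxy | hxy <;> rw [hxy]
  simpa only [real_inner_inv_sqrt_smul hr.le] using
    hQ.apply_neg_inner h𝓕 (hunit x hx) (hunit y hy)

theorem forall_sum_eq_zero_iff (hQ : DetectsDesigns Q 𝓕) {d : ℕ}
    (h𝓕 : ∀ f ∈ 𝓕, ∀ (t : ℝ) x, f (t • x) = t ^ d * f x) {R : Finset E} {r : ℝ} (hr : 0 < r)
    (hR : ∀ x ∈ R, ⟪x, x⟫ = r) :
    (∀ f ∈ 𝓕, ∑ x ∈ R, f x = 0) ↔ ∑ x ∈ R, ∑ y ∈ R, Q (⟪x, y⟫ / r) = 0 := by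
  classical
  set c := (√r)⁻¹
  have hc : c ≠ 0 := inv_ne_zero (Real.sqrt_pos.2 hr).ne'
  set lam : E →₀ ℝ := ∑ x ∈ R, Finsupp.single (c • x) 1
  have hunit : ∀ z ∈ lam.support, ⟪z, z⟫ = 1 := fun z hz => by
    obtain ⟨x, hx, hz⟩ := mem_biUnion.1 (Finsupp.support_finsetSum hz)
    rw [mem_singleton.1 (Finsupp.support_single_subset hz), real_inner_inv_sqrt_smul hr.le,
      hR x hx, div_self hr.ne']
  have henergy : kernelForm Q lam lam = ∑ x ∈ R, ∑ y ∈ R, Q (⟪x, y⟫ / r) := by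
    simp only [lam, map_sum, LinearMap.sum_apply, kernelForm_single_single,
      one_mul, c, real_inner_inv_sqrt_smul hr.le]
    exact sum_comm
  have hdesign : ∀ f ∈ 𝓕, Finsupp.linearCombination ℝ f lam = c ^ d * ∑ x ∈ R, f x :=
    fun f hf => by simp [lam, map_sum, h𝓕 f hf, mul_sum]
  rw [← henergy, hQ lam hunit]
  refine forall₂_congr fun f hf => ?_
  rw [hdesign f hf, mul_eq_zero, or_iff_right (pow_ne_zero d hc)]

end DetectsDesigns

end KernelForm

def solidHarmonics (n d : ℕ) : Set (EuclideanSpace ℝ (Fin n) → ℝ) :=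
  (fun P x => evalAt x P) '' {P | P.IsHomogeneous d ∧ IsHarmonic P}

theorem forall_mem_solidHarmonics {n d : ℕ} {p : (EuclideanSpace ℝ (Fin n) → ℝ) → Prop} :
    (∀ f ∈ solidHarmonics n d, p f) ↔
      ∀ P : MvPolynomial (Fin n) ℝ, P.IsHomogeneous d → IsHarmonic P → p fun x => evalAt x P := by
  simp only [solidHarmonics, Set.forall_mem_image, Set.mem_ofPred_eq, and_imp]

theorem apply_smul_of_mem_solidHarmonics {n d : ℕ} {f : EuclideanSpace ℝ (Fin n) → ℝ}
    (hf : f ∈ solidHarmonics n d) (t : ℝ) (x : EuclideanSpace ℝ (Fin n)) :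
    f (t • x) = t ^ d * f x := by
  obtain ⟨P, ⟨hP, -⟩, rfl⟩ := hf
  exact hP.evalAt_smul t x

theorem apply_neg_of_mem_solidHarmonics {n j : ℕ} {f : EuclideanSpace ℝ (Fin n) → ℝ}
    (hf : f ∈ solidHarmonics n (2 * j)) (x : EuclideanSpace ℝ (Fin n)) : f (-x) = f x := by
  rw [← neg_one_smul ℝ x, apply_smul_of_mem_solidHarmonics hf, (even_two_mul j).neg_one_pow,
    one_mul]

theorem degree_four_condition_iff {n : ℝ} (hn : 0 < n) (h : ℝ) {Q : ℝ → ℝ}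
    (hQ : ∀ t : ℝ,
      Q t = (n * (n + 6) / 24) * ((n + 2) * (n + 4) * t ^ 4 - 6 * (n + 2) * t ^ 2 + 3)) :
    2 * Q 1 + (4 * h - 8) * Q (1 / 2) + (n * h - 4 * h + 6) * Q 0 = 0 ↔
      (n - 10) * h + 6 * (n + 2) = 0 := by
  have hfactor : 2 * Q 1 + (4 * h - 8) * Q (1 / 2) + (n * h - 4 * h + 6) * Q 0 =
      (n * (n + 6) * (n + 4) / 96) * ((n - 10) * h + 6 * (n + 2)) := by
    rw [hQ 1, hQ (1 / 2), hQ 0]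
    ring
  rw [hfactor, mul_eq_zero, or_iff_right (by positivity)]

theorem strongly_eutactic_design_condition_general (n : ℕ) (hn : 1 ≤ n) (h : ℕ)
    (j : ℕ)
    (R : Finset (EuclideanSpace ℝ (Fin n))) (hne : R.Nonempty)
    (hnorm : ∀ x ∈ R, (inner ℝ x x : ℝ) = 2)
    (hcard : R.card = n * h)
    (hN2 : ∀ x ∈ R, (R.filter (fun y => (inner ℝ x y : ℝ) = 2)).card = 1)
    (hNm2 : ∀ x ∈ R, (R.filter (fun y => (inner ℝ x y : ℝ) = -2)).card = 1)
    (hN1 : ∀ x ∈ R, (R.filter (fun y => (inner ℝ x y : ℝ) = 1)).card = 2 * h - 4)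
    (hNm1 : ∀ x ∈ R, (R.filter (fun y => (inner ℝ x y : ℝ) = -1)).card = 2 * h - 4)
    (hN0 : ∀ x ∈ R, (R.filter (fun y => (inner ℝ x y : ℝ) = 0)).card = n * h - 4 * h + 6)
    (hvals : ∀ x ∈ R, ∀ y ∈ R, (inner ℝ x y : ℝ) = 0 ∨ (inner ℝ x y : ℝ) = 1 ∨
        (inner ℝ x y : ℝ) = -1 ∨ (inner ℝ x y : ℝ) = 2 ∨ (inner ℝ x y : ℝ) = -2)
    (Q : ℝ → ℝ)
    (hker : ∀ lam : (EuclideanSpace ℝ (Fin n)) →₀ ℝ,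
        (∀ x ∈ lam.support, (inner ℝ x x : ℝ) = 1) →
        ((∑ x ∈ lam.support, ∑ y ∈ lam.support, lam x * lam y * Q (inner ℝ x y)) = 0 ↔
          ∀ P : MvPolynomial (Fin n) ℝ, P.IsHomogeneous (2 * j) → IsHarmonic P →
            ∑ y ∈ lam.support, lam y * evalAt y P = 0)) :
    ((∀ P : MvPolynomial (Fin n) ℝ, P.IsHomogeneous (2 * j) → IsHarmonic P →
        ∑ x ∈ R, evalAt x P = 0) ↔
      2 * Q 1 + (4 * (h : ℝ) - 8) * Q (1 / 2) + ((n : ℝ) * h - 4 * h + 6) * Q 0 = 0) ∧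
    ((j = 2 ∧ (∀ t : ℝ, Q t =
          ((n : ℝ) * (n + 6) / 24) * ((n + 2) * (n + 4) * t ^ 4 - 6 * (n + 2) * t ^ 2 + 3))) →
      (2 * Q 1 + (4 * (h : ℝ) - 8) * Q (1 / 2) + ((n : ℝ) * h - 4 * h + 6) * Q 0 = 0 ↔
        ((n : ℝ) - 10) * h + 6 * (n + 2) = 0)) := by
  have hQ : DetectsDesigns Q (solidHarmonics n (2 * j)) := fun lam hlam => by
    simpa only [kernelForm_apply, Finsupp.linearCombination_apply, Finsupp.sum, smul_eq_mul,
      forall_mem_solidHarmonics] using hker lam hlam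
  have hrow : ∀ x ∈ R, ∀ F : ℝ → ℝ, (∀ t, F (-t) = F t) → ∑ y ∈ R, F ⟪x, y⟫ =
      2 * F 2 + 2 * ((2 * h - 4 : ℕ) : ℝ) * F 1 + ((n * h - 4 * h + 6 : ℕ) : ℝ) * F 0 :=
    fun x hx _ => sum_apply_inner_eq_of_card_filter (hN2 x hx) (hNm2 x hx) (hN1 x hx) (hNm1 x hx)
      (hN0 x hx) (hvals x hx)
  obtain ⟨x₀, hx₀⟩ := hne
  obtain ⟨h4, hnh⟩ : 4 ≤ 2 * h ∧ 4 * h ≤ n * h := by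
    have hcount := hrow x₀ hx₀ (fun _ => 1) fun _ => rfl
    rw [sum_const, hcard, nsmul_one] at hcount
    norm_cast at hcount
    generalize n * h = m at hcount ⊢
    omega
  have henergy : ∑ x ∈ R, ∑ y ∈ R, Q (⟪x, y⟫ / 2) = ((n * h : ℕ) : ℝ) *
      (2 * Q 1 + (4 * (h : ℝ) - 8) * Q (1 / 2) + ((n : ℝ) * h - 4 * h + 6) * Q 0) := by
    rw [← sum_congr rfl fun x hx => sum_congr rfl fun y hy => hQ.apply_abs_inner_div
        (fun _ => apply_neg_of_mem_solidHarmonics) two_pos (hnorm x hx) (hnorm y hy),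
      sum_congr rfl fun x hx => hrow x hx (fun t => Q |t / 2|) fun t => by rw [neg_div, abs_neg],
      sum_const, hcard, nsmul_eq_mul, Nat.cast_add, Nat.cast_sub h4, Nat.cast_sub hnh]
    simp only [abs_div, abs_two, abs_one, abs_zero, div_self (two_ne_zero : (2 : ℝ) ≠ 0),
      zero_div]
    push_cast
    ring
  have hnh0 : ((n * h : ℕ) : ℝ) ≠ 0 := Nat.cast_ne_zero.2 (hcard ▸ (card_pos.2 ⟨x₀, hx₀⟩).ne')
  refine ⟨(forall_mem_solidHarmonics (p := fun f => ∑ x ∈ R, f x = 0)).symm.trans ?_,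
    fun ⟨_, hQ4⟩ => degree_four_condition_iff (by exact_mod_cast hn) h hQ4⟩
  rw [hQ.forall_sum_eq_zero_iff (fun _ => apply_smul_of_mem_solidHarmonics) two_pos hnorm,
    henergy, mul_eq_zero, or_iff_right hnh0]

/-- for a nonempty strongly eutactic root system `R` of norm 2 in `ℝⁿ`
with Coxeter number `h` (so `|R| = nh`, and for each root the inner products with the
other roots are distributed as `N₂ = N₋₂ = 1`, `N₁ = N₋₁ = 2h-4`, `N₀ = nh-4h+6`),
and `Q` the degree-`2j` Gegenbauer reproducing kernel of the harmonic homogeneous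
polynomials of degree `2j` on the unit sphere, the design condition `(C_{2j})` holds
iff `2Q(1) + (4h-8)Q(1/2) + (nh-4h+6)Q(0) = 0`; for `2j = 4` and the explicit `Q`,
this identity is equivalent to `(n-10)h + 6(n+2) = 0`. -/
theorem strongly_eutactic_design_condition (n : ℕ) (hn : 1 ≤ n) (h : ℕ) (hh : 0 < h)
    (j : ℕ) (hj : 0 < j)
    (R : Finset (EuclideanSpace ℝ (Fin n))) (hne : R.Nonempty)
    (hnorm : ∀ x ∈ R, (inner ℝ x x : ℝ) = 2)
    (hcard : R.card = n * h)
    (hN2 : ∀ x ∈ R, (R.filter (fun y => (inner ℝ x y : ℝ) = 2)).card = 1)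
    (hNm2 : ∀ x ∈ R, (R.filter (fun y => (inner ℝ x y : ℝ) = -2)).card = 1)
    (hN1 : ∀ x ∈ R, (R.filter (fun y => (inner ℝ x y : ℝ) = 1)).card = 2 * h - 4)
    (hNm1 : ∀ x ∈ R, (R.filter (fun y => (inner ℝ x y : ℝ) = -1)).card = 2 * h - 4)
    (hN0 : ∀ x ∈ R, (R.filter (fun y => (inner ℝ x y : ℝ) = 0)).card = n * h - 4 * h + 6)
    (hvals : ∀ x ∈ R, ∀ y ∈ R, (inner ℝ x y : ℝ) = 0 ∨ (inner ℝ x y : ℝ) = 1 ∨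
        (inner ℝ x y : ℝ) = -1 ∨ (inner ℝ x y : ℝ) = 2 ∨ (inner ℝ x y : ℝ) = -2)
    (Q : ℝ → ℝ)
    (hker : ∀ lam : (EuclideanSpace ℝ (Fin n)) →₀ ℝ,
        (∀ x ∈ lam.support, (inner ℝ x x : ℝ) = 1) →
        ((∑ x ∈ lam.support, ∑ y ∈ lam.support, lam x * lam y * Q (inner ℝ x y)) = 0 ↔
          ∀ P : MvPolynomial (Fin n) ℝ, P.IsHomogeneous (2 * j) → IsHarmonic P →
            ∑ y ∈ lam.support, lam y * evalAt y P = 0)) :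
    ((∀ P : MvPolynomial (Fin n) ℝ, P.IsHomogeneous (2 * j) → IsHarmonic P →
        ∑ x ∈ R, evalAt x P = 0) ↔
      2 * Q 1 + (4 * (h : ℝ) - 8) * Q (1 / 2) + ((n : ℝ) * h - 4 * h + 6) * Q 0 = 0) ∧
    ((j = 2 ∧ (∀ t : ℝ, Q t =
          ((n : ℝ) * (n + 6) / 24) * ((n + 2) * (n + 4) * t ^ 4 - 6 * (n + 2) * t ^ 2 + 3))) →
      (2 * Q 1 + (4 * (h : ℝ) - 8) * Q (1 / 2) + ((n : ℝ) * h - 4 * h + 6) * Q 0 = 0 ↔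
        ((n : ℝ) - 10) * h + 6 * (n + 2) = 0)) :=
  strongly_eutactic_design_condition_general n hn h j R hne hnorm hcard hN2 hNm2 hN1 hNm1 hN0 hvals
    Q hker

end
end

section
/- A shell of norm m > 0 of ℤ³ is empty if and only if m is of the form 4ᵃ(8b+7) with a,b ≥ 0 (Legendre's three-square theorem restated via theta coefficients: the coefficient of q^m in θ₃(q)³ vanishes exactly for such m). -/
/-!
Necessity: squares are `0, 1, 4 (mod 8)`, so no sum of three squares is `7 (mod 8)`, and a sum of
three squares divisible by `4` has all three terms even, which lets one divide out `4`.

Sufficiency (Gauss, Dirichlet): it suffices to treat `n ≢ 0, 4, 7 (mod 8)`. Dirichlet's theorem and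
quadratic reciprocity give a prime `q` such that `-n` is a square mod `q` and `n ∣ q + 1` (resp.
`2n ∣ 2 + q (n + 1)²` when `n ≡ 3 (mod 8)`). From these data one writes down a positive definite
integral ternary form of determinant `δ ∈ {1, 2}` representing `δ n`. Every such form is equivalent
to `x² + y² + δ z²`: after moving its minimum `μ` to a corner, completing the square leaves a
binary form all of whose nonzero values are `≥ 3μ²/4`, while Hermite's bound `3ν² ≤ 4 det` for
its minimum `ν` forces `μ = 1`; the binary form is then reduced in the same way.
-/

namespace ThreeSquares

open Matrix

section QuadraticForm

variable {n : Type*} [Fintype n]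

def qform (A : Matrix n n ℤ) (v : n → ℤ) : ℤ := v ⬝ᵥ A *ᵥ v

def IsPrimitive (v : n → ℤ) : Prop := ∀ g : ℤ, (∀ i, g ∣ v i) → IsUnit g

lemma qform_smul (A : Matrix n n ℤ) (c : ℤ) (v : n → ℤ) :
    qform A (c • v) = c ^ 2 * qform A v := by
  simp only [qform, mulVec_smul, dotProduct_smul, smul_dotProduct, smul_eq_mul]; ring

lemma qform_transpose_mul_mul (A P : Matrix n n ℤ) (v : n → ℤ) :
    qform (Pᵀ * A * P) v = qform A (P *ᵥ v) := by
  simp only [qform, ← mulVec_mulVec, dotProduct_mulVec _ Pᵀ, vecMul_transpose]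

lemma transpose_mul_mul_apply_self [DecidableEq n] (A P : Matrix n n ℤ) (i : n) :
    (Pᵀ * A * P) i i = qform A (fun j => P j i) := by
  have h := qform_transpose_mul_mul A P (Pi.single i 1)
  rw [mulVec_single_one] at h
  refine (?_ : _ = qform (Pᵀ * A * P) (Pi.single i 1)).trans h
  simp [qform]

lemma isSymm_transpose_mul_mul {A : Matrix n n ℤ} (hA : A.IsSymm) (P : Matrix n n ℤ) :
    (Pᵀ * A * P).IsSymm := by
  simp [IsSymm, transpose_mul, hA.eq, Matrix.mul_assoc]

lemma det_transpose_mul_mul [DecidableEq n] (A : Matrix n n ℤ) {P : Matrix n n ℤ}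
    (hP : IsUnit P) : (Pᵀ * A * P).det = A.det := by
  have h := Int.isUnit_mul_self ((isUnit_iff_isUnit_det P).mp hP)
  rw [det_mul, det_mul, det_transpose]
  linear_combination A.det * h

lemma image_mulVec_compl_zero [DecidableEq n] {P : Matrix n n ℤ} (hP : IsUnit P) :
    (P *ᵥ ·) '' {0}ᶜ = {0}ᶜ := by
  rw [Set.image_compl_eq ⟨mulVec_injective_of_isUnit hP, mulVec_surjective_iff_isUnit.mpr hP⟩,
    Set.image_singleton, mulVec_zero]

lemma image_qform_transpose_mul_mul [DecidableEq n] (A : Matrix n n ℤ) {P : Matrix n n ℤ}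
    (hP : IsUnit P) : qform (Pᵀ * A * P) '' {0}ᶜ = qform A '' {0}ᶜ := by
  conv_rhs => rw [← image_mulVec_compl_zero hP, Set.image_image]
  simp only [qform_transpose_mul_mul]

lemma range_qform_transpose_mul_mul [DecidableEq n] (A : Matrix n n ℤ) {P : Matrix n n ℤ}
    (hP : IsUnit P) : Set.range (qform (Pᵀ * A * P)) = Set.range (qform A) := by
  rw [← (mulVec_surjective_iff_isUnit.mpr hP).range_comp (qform A)]
  exact congrArg Set.range (funext (qform_transpose_mul_mul A P))

lemma exists_isLeast_qform [Nonempty n] {A : Matrix n n ℤ} (hA : ∀ v ≠ 0, 0 < qform A v) :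
    ∃ v ≠ 0, IsLeast (qform A '' {0}ᶜ) (qform A v) := by
  obtain ⟨m, ⟨v, hv, rfl⟩, hmin⟩ := Int.exists_least_of_bdd (P := (· ∈ qform A '' {0}ᶜ))
    ⟨0, by rintro _ ⟨v, hv, rfl⟩; exact (hA v hv).le⟩
    ⟨_, 1, one_ne_zero, rfl⟩
  exact ⟨v, hv, ⟨v, hv, rfl⟩, hmin⟩

lemma isPrimitive_of_isLeast {A : Matrix n n ℤ} (hA : ∀ v ≠ 0, 0 < qform A v) {v : n → ℤ}
    (hv : v ≠ 0) (hmin : IsLeast (qform A '' {0}ᶜ) (qform A v)) : IsPrimitive v := by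
  intro g hg
  choose w hw using hg
  have hvw : v = g • w := funext fun i => hw i
  have hw0 : w ≠ 0 := by rintro rfl; exact hv (by simp [hvw])
  have hle := hmin.2 ⟨w, hw0, rfl⟩
  have hpos := hA w hw0
  rw [hvw, qform_smul] at hle
  have hg0 : g ≠ 0 := by rintro rfl; exact hv (by simp [hvw])
  rw [Int.isUnit_iff]
  have := abs_le.mp ((sq_le_one_iff_abs_le_one g).mp (by nlinarith))
  omega

lemma exists_isLeast_diag [DecidableEq n] {A : Matrix n n ℤ} (hA : ∀ v ≠ 0, 0 < qform A v)
    (i : n)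
    (hext : ∀ v : n → ℤ, IsPrimitive v → ∃ P : Matrix n n ℤ, IsUnit P ∧ ∀ j, P j i = v j) :
    ∃ P : Matrix n n ℤ, IsUnit P ∧ 0 < (Pᵀ * A * P) i i ∧
      IsLeast (qform (Pᵀ * A * P) '' {0}ᶜ) ((Pᵀ * A * P) i i) := by
  have : Nonempty n := ⟨i⟩
  obtain ⟨v, hv, hmin⟩ := exists_isLeast_qform hA
  obtain ⟨P, hP, hcol⟩ := hext v (isPrimitive_of_isLeast hA hv hmin)
  refine ⟨P, hP, ?_⟩
  rw [image_qform_transpose_mul_mul A hP, transpose_mul_mul_apply_self, funext hcol]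
  exact ⟨hA v hv, hmin⟩

end QuadraticForm

lemma exists_isUnit_col_eq_fin_two {v : Fin 2 → ℤ} (hv : IsPrimitive v) :
    ∃ P : Matrix (Fin 2) (Fin 2) ℤ, IsUnit P ∧ ∀ j, P j 0 = v j := by
  obtain ⟨a, b, hab⟩ : IsCoprime (v 0) (v 1) :=
    IsRelPrime.isCoprime fun d h0 h1 => hv d (Fin.forall_fin_two.mpr ⟨h0, h1⟩)
  refine ⟨!![v 0, -b; v 1, a], (isUnit_iff_isUnit_det _).mpr ?_,
    Fin.forall_fin_two.mpr ⟨rfl, rfl⟩⟩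
  rw [det_fin_two_of, show v 0 * a - -b * v 1 = 1 by linear_combination hab]
  exact isUnit_one

lemma exists_isUnit_col_eq_fin_three {v : Fin 3 → ℤ} (hv : IsPrimitive v) :
    ∃ P : Matrix (Fin 3) (Fin 3) ℤ, IsUnit P ∧ ∀ j, P j 0 = v j := by
  have hcol : ∀ P : Matrix (Fin 3) (Fin 3) ℤ, P 0 0 = v 0 → P 1 0 = v 1 → P 2 0 = v 2 →
      ∀ j, P j 0 = v j := fun P h0 h1 h2 =>
    Fin.forall_fin_succ.mpr ⟨h0, Fin.forall_fin_two.mpr ⟨h1, h2⟩⟩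
  obtain ⟨x, y, hxy⟩ := exists_gcd_eq_mul_add_mul (v 0) (v 1)
  obtain ⟨w0, hw0⟩ := gcd_dvd_left (v 0) (v 1)
  obtain ⟨w1, hw1⟩ := gcd_dvd_right (v 0) (v 1)
  obtain ⟨s, t, hst⟩ : IsCoprime (gcd (v 0) (v 1)) (v 2) :=
    IsRelPrime.isCoprime fun d hdg hd2 => hv d <| Fin.forall_fin_succ.mpr
      ⟨hdg.trans (gcd_dvd_left _ _), Fin.forall_fin_two.mpr ⟨hdg.trans (gcd_dvd_right _ _), hd2⟩⟩
  generalize gcd (v 0) (v 1) = g at hxy hw0 hw1 hst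
  by_cases hg : g = 0
  · subst hg
    have h2 : IsUnit (v 2) := IsUnit.of_mul_eq_one_right t (by linear_combination hst)
    refine ⟨!![0, 1, 0; 0, 0, 1; v 2, 0, 0], (isUnit_iff_isUnit_det _).mpr ?_,
      hcol _ (by simpa using hw0.symm) (by simpa using hw1.symm) rfl⟩
    simpa [det_fin_three] using h2
  have hw : w0 * x + w1 * y = 1 :=
    mul_left_cancel₀ hg (by linear_combination -x * hw0 - y * hw1 - hxy)
  refine ⟨!![v 0, -y, -t * w0; v 1, x, -t * w1; v 2, 0, s], (isUnit_iff_isUnit_det _).mpr ?_,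
    hcol _ rfl rfl rfl⟩
  convert isUnit_one
  simp [det_fin_three]
  linear_combination -s * hxy + t * v 2 * hw + hst

section SchurComplement

variable {k : ℕ}

/-- `B 0 0` times the Schur complement of the corner entry, so that it stays integral. -/
def schurCompl (B : Matrix (Fin (k + 1)) (Fin (k + 1)) ℤ) : Matrix (Fin k) (Fin k) ℤ :=
  of fun i j => B 0 0 * B i.succ j.succ - B 0 i.succ * B 0 j.succ

lemma mul_qform_cons {B : Matrix (Fin (k + 1)) (Fin (k + 1)) ℤ} (hB : B.IsSymm) (x : ℤ)
    (w : Fin k → ℤ) :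
    B 0 0 * qform B (vecCons x w) =
      (B 0 0 * x + ∑ j, B 0 j.succ * w j) ^ 2 + qform (schurCompl B) w := by
  simp only [qform, dotProduct, mulVec, Fin.sum_univ_succ, cons_val_zero, cons_val_succ,
    schurCompl, of_apply, hB.apply _ 0]
  simp only [sq, mul_sub, sub_mul, mul_add, add_mul, Finset.mul_sum, Finset.sum_mul,
    Finset.sum_sub_distrib, Finset.sum_add_distrib]
  simp only [mul_comm, mul_left_comm, mul_assoc]
  ring

lemma isSymm_schurCompl {B : Matrix (Fin (k + 1)) (Fin (k + 1)) ℤ} (hB : B.IsSymm) :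
    (schurCompl B).IsSymm :=
  IsSymm.ext fun i j => by simp only [schurCompl, of_apply, hB.apply]; ring

lemma exists_four_mul_sq_add_le_sq {μ : ℤ} (hμ : 0 < μ) (w : ℤ) :
    ∃ x, 4 * (μ * x + w) ^ 2 ≤ μ ^ 2 := by
  have h := Int.mul_ediv_add_emod (-w) μ
  have h0 := Int.emod_nonneg (-w) hμ.ne'
  have h1 := Int.emod_lt_of_pos (-w) hμ
  rcases le_or_gt (2 * ((-w) % μ)) μ with h2 | h2
  · exact ⟨(-w) / μ, by nlinarith⟩
  · exact ⟨(-w) / μ + 1, by nlinarith⟩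

lemma three_mul_sq_le_four_mul_qform_schurCompl {B : Matrix (Fin (k + 1)) (Fin (k + 1)) ℤ}
    (hB : B.IsSymm) (hpos : 0 < B 0 0) (hmin : IsLeast (qform B '' {0}ᶜ) (B 0 0))
    {w : Fin k → ℤ} (hw : w ≠ 0) : 3 * B 0 0 ^ 2 ≤ 4 * qform (schurCompl B) w := by
  obtain ⟨x, hx⟩ := exists_four_mul_sq_add_le_sq hpos (∑ j, B 0 j.succ * w j)
  have hle := hmin.2 ⟨vecCons x w, cons_nonzero_iff.mpr (Or.inr hw), rfl⟩
  have := mul_qform_cons hB x w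
  nlinarith

end SchurComplement

lemma qform_fin_one (G : Matrix (Fin 1) (Fin 1) ℤ) (w : Fin 1 → ℤ) :
    qform G w = G 0 0 * w 0 ^ 2 := by
  simp [qform, dotProduct, mulVec]; ring

lemma schurCompl_fin_two_apply {B : Matrix (Fin 2) (Fin 2) ℤ} (hB : B.IsSymm) :
    schurCompl B 0 0 = B.det := by
  simp [schurCompl, det_fin_two, hB.apply 1 0]

lemma det_schurCompl_fin_three {B : Matrix (Fin 3) (Fin 3) ℤ} (hB : B.IsSymm) :
    (schurCompl B).det = B 0 0 * B.det := by
  simp [schurCompl, det_fin_two, det_fin_three, hB.apply 1 0, hB.apply 2 0, hB.apply 2 1]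
  ring

lemma three_mul_sq_le_four_det_of_isLeast {B : Matrix (Fin 2) (Fin 2) ℤ} (hB : B.IsSymm)
    (hpos : 0 < B 0 0) (hmin : IsLeast (qform B '' {0}ᶜ) (B 0 0)) :
    3 * B 0 0 ^ 2 ≤ 4 * B.det := by
  simpa [qform_fin_one, schurCompl_fin_two_apply hB] using
    three_mul_sq_le_four_mul_qform_schurCompl hB hpos hmin (w := ![1]) (by simp)

theorem three_mul_sq_le_four_det {G : Matrix (Fin 2) (Fin 2) ℤ} (hG : G.IsSymm)
    (hpos : ∀ v ≠ 0, 0 < qform G v) {ν : ℤ} (hν : IsLeast (qform G '' {0}ᶜ) ν) :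
    3 * ν ^ 2 ≤ 4 * G.det := by
  obtain ⟨P, hP, hB0, hmin⟩ := exists_isLeast_diag hpos 0 fun _ => exists_isUnit_col_eq_fin_two
  have h := three_mul_sq_le_four_det_of_isLeast (isSymm_transpose_mul_mul hG P) hB0 hmin
  rw [image_qform_transpose_mul_mul G hP] at hmin
  rwa [det_transpose_mul_mul G hP, ← hν.unique hmin] at h

theorem exists_sq_add_det_mul_sq {G : Matrix (Fin 2) (Fin 2) ℤ} (hG : G.IsSymm)
    (hpos : ∀ v ≠ 0, 0 < qform G v) (hdet : G.det ≤ 2) {m : ℤ}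
    (hm : m ∈ Set.range (qform G)) :
    ∃ y z, y ^ 2 + G.det * z ^ 2 = m := by
  obtain ⟨P, hP, hB0, hmin⟩ := exists_isLeast_diag hpos 0 fun _ => exists_isUnit_col_eq_fin_two
  have hB := isSymm_transpose_mul_mul hG P
  have hdetB := det_transpose_mul_mul G hP
  have h1 : (Pᵀ * G * P) 0 0 = 1 := by
    have := three_mul_sq_le_four_det_of_isLeast hB hB0 hmin
    nlinarith
  rw [← range_qform_transpose_mul_mul G hP] at hm
  obtain ⟨v, rfl⟩ := hm
  have hsplit := mul_qform_cons hB (vecHead v) (vecTail v)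
  rw [cons_head_tail, h1, one_mul, qform_fin_one, schurCompl_fin_two_apply hB, hdetB] at hsplit
  exact ⟨_, _, hsplit.symm⟩

lemma eq_one_of_three_mul_sq_le {μ ν : ℤ} (hμ : 0 < μ) (h1 : 3 * μ ^ 2 ≤ 4 * ν)
    (h2 : 3 * ν ^ 2 ≤ 8 * μ) : μ = 1 := by
  by_contra hne
  have hμ2 : 2 ≤ μ := by omega
  have h3 : (3 * μ ^ 2) ^ 2 ≤ (4 * ν) ^ 2 := pow_le_pow_left₀ (by positivity) h1 2
  have h4 : 8 * μ ≤ μ ^ 4 := by nlinarith [pow_le_pow_left₀ (by norm_num) hμ2 3]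
  nlinarith

lemma corner_eq_one_of_isLeast {B : Matrix (Fin 3) (Fin 3) ℤ} (hB : B.IsSymm)
    (hpos : 0 < B 0 0) (hmin : IsLeast (qform B '' {0}ᶜ) (B 0 0)) (hdet : B.det ≤ 2) :
    B 0 0 = 1 := by
  have hG : ∀ w ≠ 0, 3 * B 0 0 ^ 2 ≤ 4 * qform (schurCompl B) w := fun _ hw =>
    three_mul_sq_le_four_mul_qform_schurCompl hB hpos hmin hw
  have hGpos : ∀ w ≠ 0, 0 < qform (schurCompl B) w := fun w hw => by nlinarith [hG _ hw]
  obtain ⟨w, hw, hν⟩ := exists_isLeast_qform hGpos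
  have h1 := hG w hw
  have h2 := three_mul_sq_le_four_det (isSymm_schurCompl hB) hGpos hν
  rw [det_schurCompl_fin_three hB] at h2
  exact eq_one_of_three_mul_sq_le hpos h1 (by nlinarith)

theorem exists_sq_add_sq_add_det_mul_sq {A : Matrix (Fin 3) (Fin 3) ℤ} (hA : A.IsSymm)
    (hpos : ∀ v ≠ 0, 0 < qform A v) (hdet : A.det ≤ 2) {m : ℤ}
    (hm : m ∈ Set.range (qform A)) :
    ∃ x y z, x ^ 2 + y ^ 2 + A.det * z ^ 2 = m := by
  obtain ⟨P, hP, hB0, hmin⟩ :=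
    exists_isLeast_diag hpos 0 fun _ => exists_isUnit_col_eq_fin_three
  have hB := isSymm_transpose_mul_mul hA P
  have hdetB := det_transpose_mul_mul A hP
  have h1 := corner_eq_one_of_isLeast hB hB0 hmin (hdetB ▸ hdet)
  have hG : ∀ w ≠ 0, 3 * 1 ^ 2 ≤ 4 * qform (schurCompl (Pᵀ * A * P)) w := fun _ hw =>
    h1 ▸ three_mul_sq_le_four_mul_qform_schurCompl hB hB0 hmin hw
  rw [← range_qform_transpose_mul_mul A hP] at hm
  obtain ⟨v, rfl⟩ := hm
  have hsplit := mul_qform_cons hB (vecHead v) (vecTail v)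
  rw [cons_head_tail, h1, one_mul] at hsplit
  have hdetG : (schurCompl (Pᵀ * A * P)).det = A.det := by
    rw [det_schurCompl_fin_three hB, h1, one_mul, hdetB]
  obtain ⟨y, z, hyz⟩ := exists_sq_add_det_mul_sq (isSymm_schurCompl hB)
    (fun w hw => by nlinarith [hG _ hw]) (hdetG ▸ hdet) ⟨vecTail v, rfl⟩
  rw [hdetG] at hyz
  rw [hsplit, ← hyz]
  exact ⟨_, y, z, add_assoc _ _ _⟩

/-- The form `!![q, b, 0; b, c, h; 0, h, δ * n]` is positive definite of determinant `δ` and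
takes the value `δ * n` at `![0, 0, 1]`. -/
theorem exists_sq_add_sq_add_mul_sq_eq_mul {q b c h n D δ : ℤ} (hq : 0 < q) (hD : 0 < D)
    (hδ : 0 < δ) (hδ2 : δ ≤ 2) (hqc : q * c - b ^ 2 = D) (hdet : δ * n * D - q * h ^ 2 = δ) :
    ∃ x y z : ℤ, x ^ 2 + y ^ 2 + δ * z ^ 2 = δ * n := by
  set A : Matrix (Fin 3) (Fin 3) ℤ := !![q, b, 0; b, c, h; 0, h, δ * n]
  have hsymm : A.IsSymm := IsSymm.ext fun i j => by fin_cases i <;> fin_cases j <;> rfl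
  have hexp (v : Fin 3 → ℤ) : qform A v =
      q * v 0 ^ 2 + c * v 1 ^ 2 + δ * n * v 2 ^ 2 + 2 * b * v 0 * v 1 + 2 * h * v 1 * v 2 := by
    simp [A, qform, dotProduct, mulVec, Fin.sum_univ_three]; ring
  have hpos (v : Fin 3 → ℤ) (hv : v ≠ 0) : 0 < qform A v := by
    have hsq : q * D * qform A v =
        D * (q * v 0 + b * v 1) ^ 2 + (D * v 1 + q * h * v 2) ^ 2 + q * δ * v 2 ^ 2 := by
      rw [hexp]; linear_combination D * v 1 ^ 2 * hqc + q * v 2 ^ 2 * hdet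
    have s1 := mul_nonneg hD.le (sq_nonneg (q * v 0 + b * v 1))
    have s2 := sq_nonneg (D * v 1 + q * h * v 2)
    have s3 : 0 ≤ q * δ * v 2 ^ 2 := by positivity
    by_contra hle
    have h0 : q * D * qform A v ≤ 0 := mul_nonpos_of_nonneg_of_nonpos (by positivity) (by omega)
    have e2 : q * δ * v 2 ^ 2 = 0 := by linarith
    have e1 : (D * v 1 + q * h * v 2) ^ 2 = 0 := by linarith
    have e0 : D * (q * v 0 + b * v 1) ^ 2 = 0 := by linarith
    apply hv
    simp only [mul_eq_zero, pow_eq_zero_iff two_ne_zero, hq.ne', hD.ne', hδ.ne', false_or]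
      at e0 e1 e2
    have e1' : v 1 = 0 := by simpa [e2, hD.ne'] using e1
    have e0' : v 0 = 0 := by simpa [e1', hq.ne'] using e0
    ext i; fin_cases i <;> assumption
  have hdetA : A.det = δ := by
    simp [A, det_fin_three]; linear_combination δ * n * hqc + hdet
  have hval : qform A ![0, 0, 1] = δ * n := by rw [hexp]; simp
  simpa [hdetA] using exists_sq_add_sq_add_det_mul_sq hsymm hpos (by omega) ⟨_, hval⟩

lemma exists_mul_sub_sq_eq {q : ℕ} {n D : ℤ} (hsq : IsSquare (-(n : ZMod q)))
    (hnD : ((n * D : ℤ) : ZMod q) = 1) : ∃ b c : ℤ, q * c - b ^ 2 = D := by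
  obtain ⟨s, hs⟩ := hsq
  obtain ⟨b, hb⟩ := ZMod.intCast_surjective (s * (D : ZMod q))
  obtain ⟨c, hc⟩ := (ZMod.intCast_zmod_eq_zero_iff_dvd (b ^ 2 + D) q).mp <| by
    push_cast at hnD ⊢
    rw [hb]
    linear_combination -(D : ZMod q) ^ 2 * hs - (D : ZMod q) * hnD
  exact ⟨b, c, by linarith⟩

lemma exists_sum_three_sq_of_two_mul {n x y z : ℤ} (h : x ^ 2 + y ^ 2 + 2 * z ^ 2 = 2 * n) :
    ∃ a b c : ℤ, a ^ 2 + b ^ 2 + c ^ 2 = n := by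
  have hxy : Even (x + y) := by
    have : Even (x ^ 2 + y ^ 2) := ⟨n - z ^ 2, by linarith⟩
    simpa [Int.even_add, Int.even_pow] using this
  obtain ⟨t, ht⟩ := hxy
  obtain rfl : x = 2 * t - y := by omega
  exact ⟨t, t - y, z, by linarith⟩

lemma exists_sum_three_sq_of_dvd_add_one {n q : ℕ} (hq : 0 < q)
    (hdvd : (n : ℤ) ∣ q + 1) (hsq : IsSquare (-(n : ZMod q))) :
    ∃ x y z : ℤ, x ^ 2 + y ^ 2 + z ^ 2 = n := by
  obtain ⟨D, hD⟩ := hdvd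
  have hD0 : 0 < D := pos_of_mul_pos_right (by omega : (0 : ℤ) < n * D) (by positivity)
  have hnD : ((n * D : ℤ) : ZMod q) = 1 := by
    rw [← hD, Int.cast_add, Int.cast_natCast, ZMod.natCast_self, zero_add, Int.cast_one]
  obtain ⟨b, c, hbc⟩ := exists_mul_sub_sq_eq (n := n) (by simpa using hsq) hnD
  simpa using exists_sq_add_sq_add_mul_sq_eq_mul (h := 1) (n := n) (by omega) hD0 one_pos
    one_le_two hbc (by linear_combination -hD)

lemma exists_sum_three_sq_of_two_mul_dvd {n q : ℕ} (hq : Odd q)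
    (hdvd : 2 * (n : ℤ) ∣ 2 + q * (n + 1) ^ 2) (hsq : IsSquare (-(n : ZMod q))) :
    ∃ x y z : ℤ, x ^ 2 + y ^ 2 + z ^ 2 = n := by
  obtain ⟨D, hD⟩ := hdvd
  have hD0 : 0 < D := pos_of_mul_pos_right (by rw [← hD]; positivity) (by positivity)
  have h2 : IsUnit (2 : ZMod q) := by
    simpa using (ZMod.isUnit_iff_coprime 2 q).mpr (Nat.coprime_two_left.mpr hq)
  have hnD : ((n * D : ℤ) : ZMod q) = 1 := h2.mul_left_cancel <| by
    have := congrArg (Int.cast : ℤ → ZMod q) hD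
    push_cast [ZMod.natCast_self] at this ⊢
    linear_combination -this
  obtain ⟨b, c, hbc⟩ := exists_mul_sub_sq_eq (n := n) (by simpa using hsq) hnD
  obtain ⟨x, y, z, h⟩ := exists_sq_add_sq_add_mul_sq_eq_mul (h := n + 1) (n := n)
    (by have := hq.pos; omega) hD0 two_pos le_rfl hbc (by linear_combination -hD)
  exact exists_sum_three_sq_of_two_mul h

lemma exists_prime_eq_add_four_mul {n : ℕ} (hn : 0 < n) {r : ℤ} (hr : Odd r)
    (hrn : IsCoprime r n) :
    ∃ q : ℕ, q.Prime ∧ ∃ s : ℤ, (q : ℤ) = r + 4 * (n * s) := by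
  have h4 : IsCoprime r 4 := by
    obtain ⟨t, rfl⟩ := hr
    exact ⟨2 * t + 1, -(t ^ 2 + t), by ring⟩
  obtain ⟨q, -, hq, hqr⟩ := Nat.forall_exists_prime_gt_and_zmodEq 0 (q := 4 * n) (a := r)
    (by omega) (by push_cast; exact h4.mul_right hrn)
  obtain ⟨s, hs⟩ := hqr.symm.dvd
  exact ⟨q, hq, s, by push_cast at hs; linear_combination hs⟩

lemma isSquare_neg_of_jacobiSym {n q : ℕ} [Fact q.Prime] (h : jacobiSym (-n) q = 1) :
    IsSquare (-(n : ZMod q)) := by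
  simpa using ZMod.isSquare_of_jacobiSym_eq_one h

lemma jacobiSym_neg_eq_of_mod_four_eq_one {n q : ℕ} (hq : q % 4 = 1) (hn : Odd n) :
    jacobiSym (-n) q = jacobiSym q n := by
  rw [jacobiSym.neg _ (Nat.odd_iff.mpr (by omega)), ZMod.χ₄_nat_one_mod_four hq, one_mul,
    jacobiSym.quadratic_reciprocity_one_mod_four hq hn]

theorem exists_sum_three_sq_of_mod_four_eq_one {n : ℕ} (hn : n % 4 = 1) :
    ∃ x y z : ℤ, x ^ 2 + y ^ 2 + z ^ 2 = n := by
  have hodd : Odd n := Nat.odd_iff.mpr (by omega)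
  -- `q ≡ 1 (mod 4)` and `q ≡ -1 (mod n)`
  obtain ⟨q, hq, s, hs⟩ := exists_prime_eq_add_four_mul (n := n) (r := 2 * n - 1) (by omega)
    ⟨n - 1, by ring⟩ ⟨-1, 2, by ring⟩
  have : Fact q.Prime := ⟨hq⟩
  have hJ : jacobiSym (-n) q = 1 := by
    rw [jacobiSym_neg_eq_of_mod_four_eq_one (by omega) hodd,
      jacobiSym.mod_left' (a₂ := -1)
        (Int.modEq_iff_dvd.mpr ⟨-(2 + 4 * s), by linear_combination -hs⟩),
      jacobiSym.at_neg_one hodd, ZMod.χ₄_nat_one_mod_four hn]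
  exact exists_sum_three_sq_of_dvd_add_one hq.pos
    ⟨2 + 4 * s, by linear_combination hs⟩ (isSquare_neg_of_jacobiSym hJ)

theorem exists_sum_three_sq_of_mod_eight_eq_three {n : ℕ} (hn : n % 8 = 3) :
    ∃ x y z : ℤ, x ^ 2 + y ^ 2 + z ^ 2 = n := by
  have hodd : Odd n := Nat.odd_iff.mpr (by omega)
  obtain ⟨k, hk⟩ : ∃ k : ℤ, (n : ℤ) = 2 * k + 3 := ⟨(n - 3) / 2, by omega⟩
  -- `q ≡ 1 (mod 4)` and `q ≡ -2 (mod n)`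
  obtain ⟨q, hq, s, hs⟩ := exists_prime_eq_add_four_mul (n := n) (r := n - 2) (by omega)
    ⟨k, by linear_combination hk⟩ ⟨1 + k, -k, by linear_combination hk⟩
  have : Fact q.Prime := ⟨hq⟩
  have hJ : jacobiSym (-n) q = 1 := by
    rw [jacobiSym_neg_eq_of_mod_four_eq_one (by omega) hodd,
      jacobiSym.mod_left' (a₂ := -2)
        (Int.modEq_iff_dvd.mpr ⟨-(1 + 4 * s), by linear_combination -hs⟩),
      jacobiSym.neg _ hodd, jacobiSym.at_two hodd, ZMod.χ₄_nat_three_mod_four (by omega),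
      ZMod.χ₈_nat_mod_eight, hn]
    rfl
  refine exists_sum_three_sq_of_two_mul_dvd (Nat.odd_iff.mpr (by omega)) ⟨?_, ?_⟩
    (isSquare_neg_of_jacobiSym hJ)
  · exact 2 * k ^ 2 + 6 * k + 3 + 2 * s * (n + 1) ^ 2
  · linear_combination (↑n + 1) ^ 2 * hs + ↑n * (↑n + 2 * k + 3) * hk

theorem exists_sum_three_sq_two_mul_of_odd {m : ℕ} (hm : Odd m) :
    ∃ x y z : ℤ, x ^ 2 + y ^ 2 + z ^ 2 = (2 * m : ℕ) := by
  -- `q ≡ -1 (mod m)`, and `q ≡ 1` or `5 (mod 8)` according as `m ≡ 1` or `3 (mod 4)`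
  obtain ⟨q, hq, s, hs⟩ := exists_prime_eq_add_four_mul (n := 2 * m) (r := 2 * m - 1)
    (by have := hm.pos; omega) ⟨m - 1, by ring⟩ ⟨-1, 1, by push_cast; ring⟩
  replace hs : (q : ℤ) = 2 * m - 1 + 8 * (m * s) := by push_cast at hs; linear_combination hs
  have : Fact q.Prime := ⟨hq⟩
  have hq4 : q % 4 = 1 := by have := Nat.odd_iff.mp hm; omega
  have hJ : jacobiSym (-(2 * m : ℕ)) q = 1 := by
    rw [Nat.cast_mul, Nat.cast_two, jacobiSym.neg _ (Nat.odd_iff.mpr (by omega)),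
      ZMod.χ₄_nat_one_mod_four hq4, one_mul, jacobiSym.mul_left,
      jacobiSym.at_two (Nat.odd_iff.mpr (by omega)),
      ← jacobiSym.quadratic_reciprocity_one_mod_four hq4 hm,
      jacobiSym.mod_left' (a₂ := -1)
        (Int.modEq_iff_dvd.mpr ⟨-(2 + 8 * s), by linear_combination -hs⟩),
      jacobiSym.at_neg_one hm, ZMod.χ₈_nat_mod_eight, ZMod.χ₄_nat_mod_four]
    rcases Nat.odd_mod_four_iff.mp (Nat.odd_iff.mp hm) with h | h
    · rw [show q % 8 = 1 by omega, h]; rfl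
    · rw [show q % 8 = 5 by omega, h]; rfl
  exact exists_sum_three_sq_of_dvd_add_one hq.pos
    ⟨1 + 4 * s, by push_cast; linear_combination hs⟩ (isSquare_neg_of_jacobiSym hJ)

theorem exists_sum_three_sq_of_mod_eight {n : ℕ}
    (hn : n % 8 = 1 ∨ n % 8 = 2 ∨ n % 8 = 3 ∨ n % 8 = 5 ∨ n % 8 = 6) :
    ∃ x y z : ℤ, x ^ 2 + y ^ 2 + z ^ 2 = n := by
  obtain h | h | h : n % 4 = 1 ∨ n % 8 = 3 ∨ n % 4 = 2 := by omega
  · exact exists_sum_three_sq_of_mod_four_eq_one h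
  · exact exists_sum_three_sq_of_mod_eight_eq_three h
  · rw [show n = 2 * (n / 2) by omega]
    exact exists_sum_three_sq_two_mul_of_odd (Nat.odd_iff.mpr (by omega))

theorem exists_sum_three_sq_of_forall_ne {m : ℕ} (h : ∀ a b : ℕ, m ≠ 4 ^ a * (8 * b + 7)) :
    ∃ x y z : ℤ, x ^ 2 + y ^ 2 + z ^ 2 = m := by
  rcases Nat.eq_zero_or_pos m with rfl | hm
  · exact ⟨0, 0, 0, by simp⟩
  obtain ⟨a, n, hn4, rfl⟩ := Nat.exists_eq_pow_mul_and_not_dvd hm.ne' 4 (by norm_num)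
  have hn7 : n % 8 ≠ 7 := fun h7 => h a (n / 8) (by rw [← h7, Nat.div_add_mod])
  obtain ⟨x, y, z, hxyz⟩ := exists_sum_three_sq_of_mod_eight (n := n) (by omega)
  refine ⟨2 ^ a * x, 2 ^ a * y, 2 ^ a * z, ?_⟩
  push_cast
  rw [← hxyz, show (4 : ℤ) = 2 ^ 2 by norm_num, ← pow_mul, mul_comm 2 a, pow_mul]
  ring

lemma sum_three_sq_ne_eight_mul_add_seven (x y z b : ℤ) :
    x ^ 2 + y ^ 2 + z ^ 2 ≠ 8 * b + 7 := by
  intro h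
  have key : ∀ u v w : ZMod 8, u ^ 2 + v ^ 2 + w ^ 2 ≠ 7 := by decide
  apply key x y z
  have := congrArg (Int.cast : ℤ → ZMod 8) h
  push_cast at this
  rw [this, show (8 : ZMod 8) = 0 from rfl, zero_mul, zero_add]

lemma even_of_sum_three_sq_eq_four_mul {x y z n : ℤ} (h : x ^ 2 + y ^ 2 + z ^ 2 = 4 * n) :
    Even x ∧ Even y ∧ Even z := by
  have key : ∀ u v w : ZMod 4,
      u ^ 2 + v ^ 2 + w ^ 2 = 0 → 2 * u = 0 ∧ 2 * v = 0 ∧ 2 * w = 0 := by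
    decide
  have even_of_two_mul (t : ℤ) (ht : (2 * t : ZMod 4) = 0) : Even t := by
    have := (ZMod.intCast_zmod_eq_zero_iff_dvd (2 * t) 4).mp (by exact_mod_cast ht)
    exact even_iff_two_dvd.mpr (by omega)
  have := congrArg (Int.cast : ℤ → ZMod 4) h
  push_cast at this
  rw [show (4 : ZMod 4) = 0 from rfl, zero_mul] at this
  obtain ⟨hx, hy, hz⟩ := key _ _ _ this
  exact ⟨even_of_two_mul x hx, even_of_two_mul y hy, even_of_two_mul z hz⟩

theorem sum_three_sq_ne_four_pow_mul (a b : ℕ) (x y z : ℤ) :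
    x ^ 2 + y ^ 2 + z ^ 2 ≠ 4 ^ a * (8 * b + 7) := by
  induction a generalizing x y z with
  | zero => simpa using sum_three_sq_ne_eight_mul_add_seven x y z b
  | succ a ih =>
    intro h
    obtain ⟨⟨x, rfl⟩, ⟨y, rfl⟩, ⟨z, rfl⟩⟩ :=
      even_of_sum_three_sq_eq_four_mul (n := 4 ^ a * (8 * b + 7)) (by rw [h]; ring)
    exact ih x y z (mul_left_cancel₀ four_ne_zero (by linear_combination h))

end ThreeSquares

theorem three_squares_general (m : ℕ) :
    (¬ ∃ x : Fin 3 → ℤ, ∑ i, (x i) ^ 2 = (m : ℤ)) ↔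
      ∃ a b : ℕ, m = 4 ^ a * (8 * b + 7) := by
  constructor
  · intro h
    by_contra! hm
    obtain ⟨x, y, z, hxyz⟩ := ThreeSquares.exists_sum_three_sq_of_forall_ne hm
    exact h ⟨![x, y, z], by simpa [Fin.sum_univ_three] using hxyz⟩
  · rintro ⟨a, b, rfl⟩ ⟨v, hv⟩
    rw [Fin.sum_univ_three] at hv
    exact ThreeSquares.sum_three_sq_ne_four_pow_mul a b _ _ _ (by rw [hv]; push_cast; ring)

/-- Legendre's three-square theorem: a shell of norm `m > 0` of `ℤ³` is
empty iff `m = 4ᵃ(8b+7)`. -/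
theorem three_squares (m : ℕ) (hm : 0 < m) :
    (¬ ∃ x : Fin 3 → ℤ, ∑ i, (x i) ^ 2 = (m : ℤ)) ↔
      ∃ a b : ℕ, m = 4 ^ a * (8 * b + 7) :=
  three_squares_general m
end
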